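/- arXiv:1305.1567 — 8 statements merged into one kernel-verified Lean document; each statement's English description precedes it below -/
import Mathlib

section
/- Let $a_1 \geq a_2 \geq \cdots \geq a_k > 0$ be real numbers and $q > 0$. Writing $s_p = \sum_{i=1}^k a_i^p$, one has $a_k^{1+q}(s_1 s_3 - s_2^2) + (s_2 s_{3+q} - s_3 s_{2+q}) - a_k(s_1 s_{3+q} - s_2 s_{2+q}) \geq 0$, with equality if and only if the vector $(a_1,\ldots,a_k)$ takes at most two distinct values. -/
/-!
Write `m = a_k` and `φ t = t ^ (1 + q)`. Expanding the power sums, twice the left-hand side equals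
`∑_{i,j} a_i a_j (a_i - a_j) ((a_j - m)(φ a_i - φ m) - (a_i - m)(φ a_j - φ m))`.
Since `m` is the minimum and `φ` is strictly convex, the slope of the chord of `φ` from `m` is strictly
increasing, so every summand is nonnegative, and it vanishes exactly when two of `a_i`, `a_j`, `m`
coincide. All summands vanish iff every value of `a` other than `m` is the same.
-/

open Finset

/-- For `m < y < x`, the sign of `chordGap f m x y` is that of the difference of the slopes of the
chords of `f` from `m` to `x` and to `y`. -/
def chordGap (f : ℝ → ℝ) (m x y : ℝ) : ℝ :=
  (x - y) * ((y - m) * (f x - f m) - (x - m) * (f y - f m))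

section chordGap

variable {f : ℝ → ℝ} {m x y : ℝ}

lemma chordGap_comm : chordGap f m x y = chordGap f m y x := by
  unfold chordGap; ring

lemma chordGap_eq_zero_of (h : x = y ∨ x = m ∨ y = m) : chordGap f m x y = 0 := by
  unfold chordGap
  rcases h with rfl | rfl | rfl <;> ring

variable {s : Set ℝ}

lemma StrictConvexOn.chordGap_pos_of_lt (hf : StrictConvexOn ℝ s f) (hm : m ∈ s) (hx : x ∈ s)
    (hmy : m < y) (hyx : y < x) : 0 < chordGap f m x y :=
  mul_pos (by linarith) (by linarith [hf.secant_strict_mono_aux1 hm hx hmy hyx])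

lemma StrictConvexOn.chordGap_pos (hf : StrictConvexOn ℝ s f) (hm : m ∈ s) (hx : x ∈ s)
    (hy : y ∈ s) (hmx : m < x) (hmy : m < y) (hxy : x ≠ y) : 0 < chordGap f m x y := by
  rcases hxy.lt_or_gt with hxy | hyx
  · rw [chordGap_comm]; exact hf.chordGap_pos_of_lt hm hy hmx hxy
  · exact hf.chordGap_pos_of_lt hm hx hmy hyx

lemma StrictConvexOn.chordGap_nonneg (hf : StrictConvexOn ℝ s f) (hm : m ∈ s) (hx : x ∈ s)
    (hy : y ∈ s) (hmx : m ≤ x) (hmy : m ≤ y) : 0 ≤ chordGap f m x y := by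
  by_cases h : x = y ∨ x = m ∨ y = m
  · exact (chordGap_eq_zero_of h).ge
  · push Not at h
    exact (hf.chordGap_pos hm hx hy (hmx.lt_of_ne' h.2.1) (hmy.lt_of_ne' h.2.2) h.1).le

lemma StrictConvexOn.chordGap_eq_zero_iff (hf : StrictConvexOn ℝ s f) (hm : m ∈ s) (hx : x ∈ s)
    (hy : y ∈ s) (hmx : m ≤ x) (hmy : m ≤ y) :
    chordGap f m x y = 0 ↔ x = y ∨ x = m ∨ y = m := by
  refine ⟨fun h0 => ?_, chordGap_eq_zero_of⟩
  by_contra! h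
  exact (hf.chordGap_pos hm hx hy (hmx.lt_of_ne' h.2.1) (hmy.lt_of_ne' h.2.2) h.1).ne' h0

lemma mul_mul_chordGap_rpow_nonneg {q : ℝ} (hq : 0 < q) (hm : 0 < m) (hmx : m ≤ x) (hmy : m ≤ y) :
    0 ≤ x * y * chordGap (· ^ (1 + q)) m x y :=
  mul_nonneg (mul_pos (hm.trans_le hmx) (hm.trans_le hmy)).le
    ((strictConvexOn_rpow (by linarith)).chordGap_nonneg hm.le (hm.le.trans hmx) (hm.le.trans hmy)
      hmx hmy)

lemma mul_mul_chordGap_rpow_eq_zero_iff {q : ℝ} (hq : 0 < q) (hm : 0 < m) (hmx : m ≤ x)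
    (hmy : m ≤ y) : x * y * chordGap (· ^ (1 + q)) m x y = 0 ↔ x = y ∨ x = m ∨ y = m := by
  rw [mul_eq_zero, or_iff_right (mul_pos (hm.trans_le hmx) (hm.trans_le hmy)).ne',
    (strictConvexOn_rpow (by linarith)).chordGap_eq_zero_iff hm.le
      (hm.le.trans hmx) (hm.le.trans hmy) hmx hmy]

end chordGap

section powerSum

variable {ι : Type*} [Fintype ι]

noncomputable def powerSum (a : ι → ℝ) (p : ℝ) : ℝ := ∑ i, a i ^ p

noncomputable def powerSumDefect (a : ι → ℝ) (m q : ℝ) : ℝ :=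
  m ^ (1 + q) * (powerSum a 1 * powerSum a 3 - powerSum a 2 ^ 2)
    + (powerSum a 2 * powerSum a (3 + q) - powerSum a 3 * powerSum a (2 + q))
    - m * (powerSum a 1 * powerSum a (3 + q) - powerSum a 2 * powerSum a (2 + q))

theorem two_mul_powerSumDefect (a : ι → ℝ) (ha : ∀ i, 0 < a i) (m q : ℝ) :
    2 * powerSumDefect a m q
      = ∑ i, ∑ j, a i * a j * chordGap (· ^ (1 + q)) m (a i) (a j) := by
  have hpow : ∀ i (p r : ℝ), a i ^ (p + r) = a i ^ p * a i ^ r := fun i => Real.rpow_add (ha i)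
  set T : ι → ι → ℝ := fun i j =>
    m ^ (1 + q) * (a i * a j ^ 3 - a i ^ 2 * a j ^ 2)
      + (a i ^ 2 * a j ^ 3 * a j ^ q - a i ^ 3 * a j ^ 2 * a j ^ q)
      - m * (a i * a j ^ 3 * a j ^ q - a i ^ 2 * a j ^ 2 * a j ^ q)
  have hdefect : powerSumDefect a m q = ∑ i, ∑ j, T i j := by
    rw [powerSumDefect, sq]
    simp only [powerSum, sum_mul_sum]
    simp only [T, hpow, Real.rpow_one, Real.rpow_ofNat, mul_sum, ← sum_sub_distrib,
      ← sum_add_distrib]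
    exact sum_congr rfl fun i _ => sum_congr rfl fun j _ => by ring
  have hsymm : ∀ i j, a i * a j * chordGap (· ^ (1 + q)) m (a i) (a j) = T i j + T j i := by
    intro i j
    simp only [T, chordGap, hpow, Real.rpow_one]
    ring
  simp only [hsymm, sum_add_distrib, hdefect]
  rw [sum_comm (f := fun i j => T j i)]
  ring

variable {a : ι → ℝ} {m q : ℝ}

theorem powerSumDefect_nonneg (hq : 0 < q) (hm : 0 < m) (hmin : ∀ i, m ≤ a i) :
    0 ≤ powerSumDefect a m q := by
  have hsum := two_mul_powerSumDefect a (fun i => hm.trans_le (hmin i)) m q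
  have hterm i j := mul_mul_chordGap_rpow_nonneg hq hm (hmin i) (hmin j)
  linarith [sum_nonneg fun i (_ : i ∈ univ) => sum_nonneg fun j (_ : j ∈ univ) => hterm i j]

theorem powerSumDefect_eq_zero_iff (hq : 0 < q) (hm : 0 < m) (hmin : ∀ i, m ≤ a i) :
    powerSumDefect a m q = 0 ↔ ∀ i j, a i = a j ∨ a i = m ∨ a j = m := by
  have hterm (p : ι × ι) := mul_mul_chordGap_rpow_nonneg hq hm (hmin p.1) (hmin p.2)
  rw [← mul_right_inj' two_ne_zero, mul_zero, two_mul_powerSumDefect a (hm.trans_le <| hmin ·),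
    ← Fintype.sum_prod_type', Fintype.sum_eq_zero_iff_of_nonneg hterm]
  simp only [funext_iff, Prod.forall, Pi.zero_apply,
    mul_mul_chordGap_rpow_eq_zero_iff hq hm (hmin _) (hmin _)]

end powerSum

lemma Finset.card_le_two_iff_of_mem {α : Type*} [DecidableEq α] {s : Finset α} {m : α}
    (hm : m ∈ s) : #s ≤ 2 ↔ ∀ x ∈ s, ∀ y ∈ s, x = y ∨ x = m ∨ y = m := by
  have hcard : #s ≤ 2 ↔ #(s.erase m) ≤ 1 := by
    rw [card_erase_of_mem hm]
    have := card_pos.2 ⟨m, hm⟩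
    omega
  rw [hcard, card_le_one]
  simp only [mem_erase]
  grind

theorem stmt_0 (k : ℕ) (hk : 0 < k) (a : Fin k → ℝ) (q : ℝ) (hq : 0 < q)
    (hpos : ∀ i, 0 < a i) (hmono : ∀ i j : Fin k, i ≤ j → a j ≤ a i) :
    let s : ℝ → ℝ := fun p => ∑ i, a i ^ p
    let ak : ℝ := a ⟨k - 1, by omega⟩
    0 ≤ ak ^ (1 + q) * (s 1 * s 3 - (s 2) ^ 2) + (s 2 * s (3 + q) - s 3 * s (2 + q))
        - ak * (s 1 * s (3 + q) - s 2 * s (2 + q)) ∧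
    (ak ^ (1 + q) * (s 1 * s 3 - (s 2) ^ 2) + (s 2 * s (3 + q) - s 3 * s (2 + q))
        - ak * (s 1 * s (3 + q) - s 2 * s (2 + q)) = 0 ↔
      (Finset.image a Finset.univ).card ≤ 2) := by
  intro s ak
  have hmin (i : Fin k) : ak ≤ a i := hmono i _ (Fin.le_def.2 (Nat.le_sub_one_of_lt i.isLt))
  have hmem : ak ∈ univ.image a := mem_image_of_mem a (mem_univ _)
  change 0 ≤ powerSumDefect a ak q ∧ (powerSumDefect a ak q = 0 ↔ _)
  refine ⟨powerSumDefect_nonneg hq (hpos _) hmin, ?_⟩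
  rw [powerSumDefect_eq_zero_iff hq (hpos _) hmin, card_le_two_iff_of_mem hmem]
  simp only [forall_mem_image, mem_univ, true_implies, ak]
end

section
/- Fix real numbers $x > y > 1$ and define $g : (0,\infty) \to \mathbb{R}$ by $g(q) = x - y + (y-1)x^{1+q} - (x-1)y^{1+q}$. Then $g(q) > 0$ for all $q > 0$. -/
/-! The inequality is the strict chord inequality of the strictly convex function `t ↦ t ^ (1 + q)`
at the three points `1 < y < x`. -/

theorem StrictConvexOn.sub_mul_lt_sub_mul_add_sub_mul {𝕜 : Type*} [Field 𝕜] [LinearOrder 𝕜]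
    [IsStrictOrderedRing 𝕜] {s : Set 𝕜} {f : 𝕜 → 𝕜} (hf : StrictConvexOn 𝕜 s f) {a b c : 𝕜}
    (ha : a ∈ s) (hc : c ∈ s) (hab : a < b) (hbc : b < c) :
    (c - a) * f b < (c - b) * f a + (b - a) * f c := by
  have hslope := hf.slope_strict_mono_adjacent ha hc hab hbc
  rw [div_lt_div_iff₀ (sub_pos.2 hab) (sub_pos.2 hbc)] at hslope
  linear_combination hslope

theorem stmt_1 (x y : ℝ) (hy : 1 < y) (hxy : y < x) (q : ℝ) (hq : 0 < q) :
    0 < x - y + (y - 1) * x ^ (1 + q) - (x - 1) * y ^ (1 + q) := by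
  have hchord :=
    (strictConvexOn_rpow (by linarith : (1 : ℝ) < 1 + q)).sub_mul_lt_sub_mul_add_sub_mul
      (Set.mem_Ici.2 zero_le_one) (Set.mem_Ici.2 (by linarith : (0 : ℝ) ≤ x)) hy hxy
  simp only [Real.one_rpow, mul_one] at hchord
  linarith
end

section
/- For fixed real numbers $0 < b < 1 < a$, the function $p \mapsto \frac{p-1}{p} \cdot \frac{a^p - b^p}{a^{p-1} - b^{p-1}}$ is increasing on $(1, +\infty)$. -/
/-! Write `log a = m + c` and `log b = m - c` with `c > 0`. Then
`(a ^ s - b ^ s) / s = 2 c · exp (m s) · sinh (c s) / (c s)`, and `x ↦ log (sinh x / x)` is convex on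
`(0, ∞)` since its second derivative is `1 / x² - 1 / sinh² x ≥ 0`. Hence
`g s = log ((a ^ s - b ^ s) / s)` is convex, so its increments `g p - g (p - 1)` increase with `p`,
and the function in question is `exp (g p - g (p - 1))`. -/

open Real Set

theorem ConvexOn.monotoneOn_sub_comp_sub_const {𝕜 : Type*} [Field 𝕜] [LinearOrder 𝕜]
    [IsStrictOrderedRing 𝕜] {s : Set 𝕜} {f : 𝕜 → 𝕜} (hf : ConvexOn 𝕜 s f) {d : 𝕜} (hd : 0 ≤ d) :
    MonotoneOn (fun x => f x - f (x - d)) {x | x - d ∈ s ∧ x ∈ s} := by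
  rcases hd.eq_or_lt with rfl | hd
  · simpa using monotoneOn_const
  rintro p ⟨hp', hp⟩ q ⟨hq', hq⟩ hpq
  have h₁ : (f p - f (p - d)) / d ≤ (f q - f (p - d)) / (q - (p - d)) := by
    simpa using hf.secant_mono hp' hp hq (by linarith) (by linarith) hpq
  have h₂ : (f q - f (p - d)) / (q - (p - d)) ≤ (f q - f (q - d)) / d := by
    have := hf.secant_mono hq hp' hq' (by linarith) (by linarith) (by linarith)
    rwa [← neg_div_neg_eq, neg_sub, neg_sub, ← neg_div_neg_eq (f (q - d) - f q), neg_sub, neg_sub,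
      sub_sub_cancel] at this
  exact (div_le_div_iff_of_pos_right hd).1 (h₁.trans h₂)

theorem Real.convexOn_log_sinh_div_self : ConvexOn ℝ (Ioi 0) fun x => log (sinh x / x) := by
  have hderiv (x : ℝ) (hx : 0 < x) :
      HasDerivAt (fun x => log (sinh x / x)) (cosh x / sinh x - x⁻¹) x := by
    have hsinh : 0 < sinh x := sinh_pos_iff.2 hx
    refine (((hasDerivAt_sinh x).div (hasDerivAt_id' x) hx.ne').log
      (div_pos hsinh hx).ne').congr_deriv ?_
    simp only [Pi.div_apply]
    field_simp
  have hderiv2 (x : ℝ) (hx : 0 < x) :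
      HasDerivAt (fun x => cosh x / sinh x - x⁻¹) ((x ^ 2)⁻¹ - (sinh x ^ 2)⁻¹) x := by
    have hsinh : 0 < sinh x := sinh_pos_iff.2 hx
    refine (((hasDerivAt_cosh x).div (hasDerivAt_sinh x) hsinh.ne').sub
      (hasDerivAt_inv hx.ne')).congr_deriv ?_
    field_simp
    linear_combination -x ^ 2 * cosh_sq_sub_sinh_sq x
  refine convexOn_of_hasDerivWithinAt2_nonneg (convex_Ioi 0)
    (fun x hx => (hderiv x hx).continuousAt.continuousWithinAt)
    (fun x hx => (hderiv x (interior_subset hx)).hasDerivWithinAt)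
    (fun x hx => (hderiv2 x (interior_subset hx)).hasDerivWithinAt) fun x hx => ?_
  have hx : 0 < x := interior_subset hx
  have hsq : x ^ 2 ≤ sinh x ^ 2 := pow_le_pow_left₀ hx.le (self_le_sinh_iff.2 hx.le) 2
  exact sub_nonneg.2 (inv_anti₀ (by positivity) hsq)

theorem convexOn_log_rpow_sub_rpow_div {a b : ℝ} (hb : 0 < b) (hba : b < a) :
    ConvexOn ℝ (Ioi 0) fun s => log ((a ^ s - b ^ s) / s) := by
  set c := (log a - log b) / 2
  set m := (log a + log b) / 2
  have hc : 0 < c := by have := log_lt_log hb hba; simp only [c]; linarith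
  have hscaled : ConvexOn ℝ (Ioi 0) fun s => log (sinh (c * s) / (c * s)) :=
    ⟨convex_Ioi 0, fun x hx y hy μ ν hμ hν hμν => by
      simpa [smul_eq_mul, mul_add, mul_left_comm c] using
        convexOn_log_sinh_div_self.2 (mul_pos hc hx) (mul_pos hc hy) hμ hν hμν⟩
  have haffine : ConvexOn ℝ (Ioi 0) fun s => log (2 * c) + m * s :=
    (convexOn_const _ (convex_Ioi 0)).add ((LinearMap.mul ℝ ℝ m).convexOn (convex_Ioi 0))
  refine (haffine.add hscaled).congr fun s (hs : 0 < s) => ?_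
  have hsinh : 0 < sinh (c * s) / (c * s) := div_pos (sinh_pos_iff.2 (by positivity)) (by positivity)
  have hfactor : (a ^ s - b ^ s) / s = 2 * c * exp (m * s) * (sinh (c * s) / (c * s)) := by
    rw [rpow_def_of_pos (hb.trans hba), rpow_def_of_pos hb, sinh_eq,
      show log a * s = m * s + c * s by ring, show log b * s = m * s + -(c * s) by ring,
      exp_add, exp_add]
    field_simp
  rw [hfactor, log_mul (by positivity) hsinh.ne', log_mul (by positivity) (exp_pos _).ne', log_exp]
  rfl

theorem stmt_3 (a b : ℝ) (hb : 0 < b) (hb1 : b < 1) (ha : 1 < a) :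
    MonotoneOn (fun p : ℝ => (p - 1) / p * ((a ^ p - b ^ p) / (a ^ (p - 1) - b ^ (p - 1))))
      (Set.Ioi 1) := by
  have hba : b < a := hb1.trans ha
  have hpos (s : ℝ) (hs : 0 < s) : 0 < (a ^ s - b ^ s) / s :=
    div_pos (sub_pos.2 (rpow_lt_rpow hb.le hba hs)) hs
  have hlog_increment : MonotoneOn (fun p => log ((a ^ p - b ^ p) / p) -
      log ((a ^ (p - 1) - b ^ (p - 1)) / (p - 1))) (Ioi 1) :=
    ((convexOn_log_rpow_sub_rpow_div hb hba).monotoneOn_sub_comp_sub_const zero_le_one).mono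
      fun p (hp : 1 < p) => ⟨sub_pos.2 hp, zero_lt_one.trans hp⟩
  refine (exp_monotone.comp_monotoneOn hlog_increment).congr fun p (hp : 1 < p) => ?_
  have hp0 : 0 < p := zero_lt_one.trans hp
  simp only [Function.comp_apply, exp_sub, exp_log (hpos p hp0), exp_log (hpos _ (sub_pos.2 hp))]
  field_simp
end

section
/- For fixed $c > 1$, the function $f_c : (1, +\infty) \to \mathbb{R}$ defined by $f_c(p) = \frac{c^p - 1}{p} \cdot \frac{p-1}{c^{p-1} - 1}$ is increasing. -/
/-!
Write `c ^ p = exp (L p)` with `L = log c > 0` and `φ u = log ((exp u - 1) / u)`. Then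
`f_c p = exp (φ (L p) - φ (L p - L))`, so it suffices that `φ` is convex on `(0, ∞)`: the
increments of a convex function over intervals of fixed length `L` increase. Convexity of `φ`
amounts to `φ'' u = 1 / u ^ 2 - exp u / (exp u - 1) ^ 2 ≥ 0`, i.e. `u ≤ 2 sinh (u / 2)`.
-/

open Real Set

theorem ConvexOn.sub_le_sub_of_le {s : Set ℝ} {f : ℝ → ℝ} (hf : ConvexOn ℝ s f) {δ p q : ℝ}
    (hδ : 0 < δ) (hp : p - δ ∈ s) (hq : q ∈ s) (hpq : p ≤ q) :
    f p - f (p - δ) ≤ f q - f (q - δ) := by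
  have hp' : p ∈ s := hf.1.ordConnected.out hp hq ⟨by linarith, hpq⟩
  have hq' : q - δ ∈ s := hf.1.ordConnected.out hp hq ⟨by linarith, by linarith⟩
  have left := hf.secant_mono hp hp' hq (by linarith) (by linarith) hpq
  have right := hf.secant_mono hq hp hq' (by linarith) (by linarith) (by linarith)
  have key : (f p - f (p - δ)) / δ ≤ (f q - f (q - δ)) / δ :=
    calc (f p - f (p - δ)) / δ ≤ (f q - f (p - δ)) / (q - (p - δ)) := by
          simpa only [sub_sub_cancel] using left
      _ = (f (p - δ) - f q) / (p - δ - q) := by rw [← neg_div_neg_eq, neg_sub, neg_sub]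
      _ ≤ (f (q - δ) - f q) / (q - δ - q) := right
      _ = (f q - f (q - δ)) / δ := by rw [← neg_div_neg_eq, neg_sub, neg_sub, sub_sub_cancel]
  exact (div_le_div_iff_of_pos_right hδ).mp key

theorem Real.sq_mul_exp_le_sq_exp_sub_one {u : ℝ} (hu : 0 ≤ u) :
    u ^ 2 * exp u ≤ (exp u - 1) ^ 2 := by
  have hsinh : u ≤ 2 * sinh (u / 2) := by
    linarith [self_le_sinh_iff.mpr (by positivity : 0 ≤ u / 2)]
  have hsplit : (exp u - 1) ^ 2 = (2 * sinh (u / 2)) ^ 2 * exp u := by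
    rw [sinh_eq, exp_neg, show exp u = exp (u / 2) ^ 2 by rw [← exp_nat_mul]; ring_nf]
    field_simp
  rw [hsplit]
  gcongr

noncomputable def logExpSubOneDiv (u : ℝ) : ℝ := log (exp u - 1) - log u

theorem exp_logExpSubOneDiv {u : ℝ} (hu : 0 < u) :
    exp (logExpSubOneDiv u) = (exp u - 1) / u := by
  rw [logExpSubOneDiv, exp_sub, exp_log (sub_pos.mpr (one_lt_exp_iff.mpr hu)), exp_log hu]

theorem convexOn_logExpSubOneDiv : ConvexOn ℝ (Ioi 0) logExpSubOneDiv := by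
  have hexp {u : ℝ} (hu : 0 < u) : 0 < exp u - 1 := sub_pos.mpr (one_lt_exp_iff.mpr hu)
  have hderiv {u : ℝ} (hu : 0 < u) :
      HasDerivAt logExpSubOneDiv (exp u / (exp u - 1) - u⁻¹) u :=
    (((hasDerivAt_exp u).sub_const 1).log (hexp hu).ne').sub (hasDerivAt_log hu.ne')
  have hderiv2 {u : ℝ} (hu : 0 < u) : HasDerivAt (fun u => exp u / (exp u - 1) - u⁻¹)
      ((u ^ 2)⁻¹ - exp u / (exp u - 1) ^ 2) u := by
    refine (((hasDerivAt_exp u).fun_div ((hasDerivAt_exp u).sub_const 1) (hexp hu).ne').sub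
      (hasDerivAt_inv hu.ne')).congr_deriv ?_
    field_simp
    ring
  refine convexOn_of_hasDerivWithinAt2_nonneg (convex_Ioi 0)
    (f' := fun u => exp u / (exp u - 1) - u⁻¹) (f'' := fun u => (u ^ 2)⁻¹ - exp u / (exp u - 1) ^ 2)
    (fun u hu => (hderiv hu).continuousAt.continuousWithinAt) ?_ ?_ ?_ <;> rw [interior_Ioi]
  · exact fun u hu => (hderiv hu).hasDerivWithinAt
  · exact fun u hu => (hderiv2 hu).hasDerivWithinAt
  · intro u hu
    have := sq_mul_exp_le_sq_exp_sub_one hu.le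
    rw [sub_nonneg, div_le_iff₀ (pow_pos (hexp hu) 2), inv_mul_eq_div, le_div_iff₀ (pow_pos hu 2)]
    linarith

theorem rpow_sub_one_div_mul_eq_exp {c p : ℝ} (hc : 1 < c) (hp : 1 < p) :
    (c ^ p - 1) / p * ((p - 1) / (c ^ (p - 1) - 1)) =
      exp (logExpSubOneDiv (log c * p) - logExpSubOneDiv (log c * p - log c)) := by
  have hL : 0 < log c := log_pos hc
  have hp0 : 0 < p - 1 := sub_pos.mpr hp
  rw [exp_sub, exp_logExpSubOneDiv (by positivity),
    exp_logExpSubOneDiv (by rw [← mul_sub_one]; positivity), rpow_def_of_pos (by linarith),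
    rpow_def_of_pos (by linarith), ← mul_sub_one]
  field_simp

theorem stmt_4 (c : ℝ) (hc : 1 < c) :
    MonotoneOn (fun p : ℝ => (c ^ p - 1) / p * ((p - 1) / (c ^ (p - 1) - 1)))
      (Set.Ioi 1) := by
  intro p hp q hq hpq
  have hL : 0 < log c := log_pos hc
  have hincr := convexOn_logExpSubOneDiv.sub_le_sub_of_le hL
    (show log c * p - log c ∈ Ioi 0 by rw [← mul_sub_one]; exact mul_pos hL (sub_pos.mpr hp))
    (show log c * q ∈ Ioi 0 from mul_pos hL (zero_lt_one.trans hq))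
    (mul_le_mul_of_nonneg_left hpq hL.le)
  simp only [rpow_sub_one_div_mul_eq_exp hc hp, rpow_sub_one_div_mul_eq_exp hc hq]
  exact exp_le_exp.mpr hincr
end

section
/- For fixed $p > 1$ and $c > 1$, the quantity $h(c) = \frac{(c^p - 1)(c^{p-1} - 1)}{c^{p-1}(c - 1)} - p(p-1)\log c$ is nonnegative. -/
/-!
Writing `c = exp (2 v)`, the quotient equals `2 sinh (p v) sinh ((p - 1) v) / sinh v`, while
`p (p - 1) log c = 2 p (p - 1) v`. The inequality then follows from `p sinh v ≤ sinh (p v)`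
and `(p - 1) v ≤ sinh ((p - 1) v)`.
-/

open Real

theorem mul_sinh_le_sinh_mul {p x : ℝ} (hp : 1 ≤ p) (hx : 0 ≤ x) :
    p * sinh x ≤ sinh (p * x) := by
  have hmono : Monotone fun y => sinh (p * y) - p * sinh y := by
    refine monotone_of_deriv_nonneg (by fun_prop) fun y => ?_
    have hderiv : HasDerivAt (fun y => sinh (p * y) - p * sinh y)
        (cosh (p * y) * p - p * cosh y) y :=
      (((hasDerivAt_id y).const_mul p).sinh.congr_deriv (by simp)).sub
        ((hasDerivAt_sinh y).const_mul p)
    rw [hderiv.deriv, mul_comm, ← mul_sub]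
    refine mul_nonneg (by linarith) (sub_nonneg.2 (cosh_le_cosh.2 ?_))
    rw [abs_mul]
    exact le_mul_of_one_le_left (abs_nonneg y) (hp.trans (le_abs_self p))
  simpa using hmono hx

theorem mul_sub_one_mul_mul_sinh_le {p v : ℝ} (hp : 1 ≤ p) (hv : 0 ≤ v) :
    p * (p - 1) * v * sinh v ≤ sinh (p * v) * sinh ((p - 1) * v) := by
  have hpv : p * sinh v ≤ sinh (p * v) := mul_sinh_le_sinh_mul hp hv
  have hp1v : (p - 1) * v ≤ sinh ((p - 1) * v) :=
    self_le_sinh_iff.2 (mul_nonneg (by linarith) hv)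
  calc p * (p - 1) * v * sinh v = p * sinh v * ((p - 1) * v) := by ring
    _ ≤ sinh (p * v) * sinh ((p - 1) * v) :=
      mul_le_mul hpv hp1v (mul_nonneg (by linarith) hv) (sinh_nonneg_iff.2 (by positivity))

theorem rpow_sub_one_eq_sinh {c : ℝ} (hc : 0 < c) (a : ℝ) :
    c ^ a - 1 = 2 * c ^ (a / 2) * sinh (a * (log c / 2)) := by
  have hsq : exp (log c * a) = exp (a * (log c / 2)) * exp (a * (log c / 2)) := by
    rw [← exp_add]; ring_nf
  rw [rpow_def_of_pos hc, rpow_def_of_pos hc, sinh_eq, hsq, exp_neg]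
  field_simp

theorem rpow_sub_one_mul_rpow_sub_one_div_eq_sinh {p c : ℝ} (hc : 0 < c) (hc1 : c ≠ 1) :
    (c ^ p - 1) * (c ^ (p - 1) - 1) / (c ^ (p - 1) * (c - 1))
      = 2 * (sinh (p * (log c / 2)) * sinh ((p - 1) * (log c / 2))) / sinh (log c / 2) := by
  have hsinh : sinh (log c / 2) ≠ 0 :=
    sinh_ne_zero.2 (div_ne_zero (log_ne_zero_of_pos_of_ne_one hc hc1) two_ne_zero)
  have hpow : c ^ (p / 2) * c ^ ((p - 1) / 2) = c ^ (p - 1) * c ^ ((1 : ℝ) / 2) := by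
    rw [← rpow_add hc, ← rpow_add hc]; ring_nf
  have hc_sub_one : c - 1 = 2 * c ^ ((1 : ℝ) / 2) * sinh (log c / 2) := by
    simpa using rpow_sub_one_eq_sinh hc 1
  rw [rpow_sub_one_eq_sinh hc p, rpow_sub_one_eq_sinh hc (p - 1), hc_sub_one,
    div_eq_div_iff (by positivity) hsinh]
  linear_combination
    (4 * sinh (p * (log c / 2)) * sinh ((p - 1) * (log c / 2)) * sinh (log c / 2)) * hpow

theorem stmt_5 (p c : ℝ) (hp : 1 < p) (hc : 1 < c) :
    0 ≤ (c ^ p - 1) * (c ^ (p - 1) - 1) / (c ^ (p - 1) * (c - 1))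
        - p * (p - 1) * Real.log c := by
  have hv : 0 < log c / 2 := half_pos (log_pos hc)
  rw [rpow_sub_one_mul_rpow_sub_one_div_eq_sinh (by linarith) hc.ne', sub_nonneg,
    le_div_iff₀ (sinh_pos_iff.2 hv)]
  nlinarith [mul_sub_one_mul_mul_sinh_le hp.le hv.le]
end

section
/- Let $N : \mathbb{R}^k \to \mathbb{R}$ be a norm that is invariant under permutation of coordinates. Let $x \in \mathbb{R}^k$ with $x_1 \geq x_2 \geq \cdots \geq x_k$, and let $\lambda$ be an element of the subdifferential $\partial N(x)$. If $x_j > x_{j+1}$ for some index $j$, then $\lambda_j \geq \lambda_{j+1}$. -/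
theorem stmt_14 (k : ℕ) (N : (Fin k → ℝ) → ℝ)
    (hsub : ∀ u v : Fin k → ℝ, N (u + v) ≤ N u + N v)
    (hhom : ∀ (c : ℝ) (u : Fin k → ℝ), N (c • u) = |c| * N u)
    (hperm : ∀ (σ : Equiv.Perm (Fin k)) (u : Fin k → ℝ), N (u ∘ σ) = N u)
    (x lam : Fin k → ℝ) (hx : ∀ i j : Fin k, i ≤ j → x j ≤ x i)
    (hsubdiff : ∀ b : Fin k → ℝ, (∑ i, lam i * (b i - x i)) ≤ N b - N x)
    (j : Fin k) (hj : (j : ℕ) + 1 < k)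
    (hstrict : x ⟨(j : ℕ) + 1, hj⟩ < x j) :
    lam ⟨(j : ℕ) + 1, hj⟩ ≤ lam j := by
  set j' : Fin k := ⟨(j : ℕ) + 1, hj⟩ with hj'
  have hne : j ≠ j' := by
    intro h
    have := congrArg (Fin.val) h
    simp [hj'] at this
  have key := hsubdiff (x ∘ Equiv.swap j j')
  rw [hperm (Equiv.swap j j') x, sub_self] at key
  have hsum : (∑ i, lam i * ((x ∘ Equiv.swap j j') i - x i))
      = lam j * (x j' - x j) + lam j' * (x j - x j') := by
    rw [Finset.sum_eq_add_of_mem j j' (Finset.mem_univ _) (Finset.mem_univ _) hne]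
    · simp [Equiv.swap_apply_left, Equiv.swap_apply_right]
    · intro i _ hi
      have h1 : i ≠ j := hi.1
      have h2 : i ≠ j' := hi.2
      simp [Equiv.swap_apply_of_ne_of_ne h1 h2]
  rw [hsum] at key
  nlinarith [key, hstrict]
end

section
/- Let $N : \mathbb{R}^k \to \mathbb{R}$ be a norm satisfying $N(x + s \mathbf{1}) = |s - s_0(x)| + N(x + s_0(x)\mathbf{1})$ for some $s_0(x) \in \mathbb{R}$ (where $\mathbf{1} = (1,\ldots,1)$), and let $\lambda \in \Delta_k$ (the probability simplex). If $\langle \lambda, a \rangle \leq N(a)$ for all $a \in \Delta_k$ and $N(\mathbf{1}) = 1$, then $\langle \lambda, a \rangle \leq N(a)$ for all $a \in \mathbb{R}^k$. -/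
theorem stmt_16 (k : ℕ) (N : (Fin k → ℝ) → ℝ)
    (hsub : ∀ u v : Fin k → ℝ, N (u + v) ≤ N u + N v)
    (hhom : ∀ (c : ℝ) (u : Fin k → ℝ), N (c • u) = |c| * N u)
    (hperm : ∀ (σ : Equiv.Perm (Fin k)) (u : Fin k → ℝ), N (u ∘ σ) = N u)
    (hs0 : ∀ x : Fin k → ℝ, ∃ s0 : ℝ, ∀ s : ℝ,
      N (x + s • (fun _ => (1 : ℝ))) = |s - s0| + N (x + s0 • (fun _ => (1 : ℝ))))
    (lam : Fin k → ℝ) (hlam_nonneg : ∀ i, 0 ≤ lam i) (hlam_sum : ∑ i, lam i = 1)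
    (hdual : ∀ a : Fin k → ℝ, (∀ i, 0 ≤ a i) → (∑ i, a i) = 1 → (∑ i, lam i * a i) ≤ N a)
    (hone : N (fun _ => (1 : ℝ)) = 1) :
    ∀ a : Fin k → ℝ, (∑ i, lam i * a i) ≤ N a := by
  have hN0 : N 0 = 0 := by
    have := hhom 0 0
    simpa using this
  -- Step 1: the inequality for nonnegative vectors
  have hnn : ∀ b : Fin k → ℝ, (∀ i, 0 ≤ b i) → (∑ i, lam i * b i) ≤ N b := by
    intro b hb
    by_cases h : (∑ i, b i) = 0
    · have hb0 : b = 0 := by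
        funext i
        have := (Finset.sum_eq_zero_iff_of_nonneg (fun j _ => hb j)).mp h i (Finset.mem_univ i)
        simpa using this
      simp [hb0, hN0]
    · have hts : 0 ≤ ∑ i, b i := Finset.sum_nonneg fun i _ => hb i
      have ht : 0 < ∑ i, b i := lt_of_le_of_ne hts (Ne.symm h)
      set t : ℝ := ∑ i, b i with htdef
      have hd := hdual (t⁻¹ • b) (fun i => by
          have := hb i
          have : 0 ≤ t⁻¹ * b i := mul_nonneg (inv_nonneg.mpr hts) this
          simpa using this)
        (by
          simp only [Pi.smul_apply, smul_eq_mul]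
          rw [← Finset.mul_sum, ← htdef, inv_mul_cancel₀ ht.ne'])
      have hNs : N (t⁻¹ • b) = t⁻¹ * N b := by
        rw [hhom, abs_of_nonneg (inv_nonneg.mpr hts)]
      rw [hNs] at hd
      have : (∑ i, lam i * (t⁻¹ * b i)) = t⁻¹ * ∑ i, lam i * b i := by
        rw [Finset.mul_sum]; congr 1; funext i; ring
      simp only [Pi.smul_apply, smul_eq_mul] at hd
      rw [this] at hd
      calc (∑ i, lam i * b i) = t * (t⁻¹ * ∑ i, lam i * b i) := by
            field_simp
        _ ≤ t * (t⁻¹ * N b) := by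
            apply mul_le_mul_of_nonneg_left hd hts
        _ = N b := by field_simp
  -- Step 2: general case via shifting
  intro a
  set s : ℝ := ∑ i, |a i| with hsdef
  have hs : 0 ≤ s := Finset.sum_nonneg fun i _ => abs_nonneg _
  set b : Fin k → ℝ := a + s • (fun _ => (1 : ℝ)) with hbdef
  have hbnn : ∀ i, 0 ≤ b i := by
    intro i
    have h1 : |a i| ≤ s := Finset.single_le_sum (fun j _ => abs_nonneg (a j)) (Finset.mem_univ i)
    have h2 : -(a i) ≤ |a i| := neg_le_abs _
    simp only [hbdef, Pi.add_apply, Pi.smul_apply, smul_eq_mul, mul_one]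
    linarith
  have key := hnn b hbnn
  have h1 : N b ≤ N a + s := by
    calc N b ≤ N a + N (s • fun _ => (1 : ℝ)) := hsub _ _
      _ = N a + s := by rw [hhom, hone, abs_of_nonneg hs, mul_one]
  have h2 : (∑ i, lam i * b i) = (∑ i, lam i * a i) + s := by
    simp only [hbdef, Pi.add_apply, Pi.smul_apply, smul_eq_mul, mul_one, mul_add]
    rw [Finset.sum_add_distrib, ← Finset.sum_mul, hlam_sum, one_mul]
  linarith
end

section
/- Let $\varphi(x,t) = (\sqrt{x(1-t)} + \sqrt{t(1-x)})^2$ and fix $t \in (0,1)$. Then for every $x \in (0, 1-t)$, the inequality $\left(\log\frac{\varphi(x,t)}{x} - \log\frac{1 - \varphi(x,t)}{1-x}\right) \partial_x \varphi(x,t) \leq \frac{\varphi(x,t)}{x} - \frac{1 - \varphi(x,t)}{1-x}$ holds. -/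
/-!
With `a = φ/x` and `b = (1 - φ)/(1 - x)` one has the identity `a * b = (∂ₓφ)²`, and `0 < b ≤ a`
because `x < φ < 1`. The claim is therefore the logarithmic–geometric mean inequality
`(log a - log b) * √(a * b) ≤ a - b`, which after writing `a / b = exp (2 v)` is `v ≤ sinh v`.
-/

open Real

lemma log_le_sub_inv_div_two {r : ℝ} (hr : 1 ≤ r) : log r ≤ (r - r⁻¹) / 2 := by
  rw [← sinh_log (by positivity)]
  exact self_le_sinh_iff.2 (log_nonneg hr)

lemma log_sub_log_mul_sqrt_mul_le {a b : ℝ} (hb : 0 < b) (hba : b ≤ a) :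
    (log a - log b) * √(a * b) ≤ a - b := by
  have hsb : 0 < √b := sqrt_pos.2 hb
  have hsa : 0 < √a := sqrt_pos.2 (hb.trans_le hba)
  have hlog : log a - log b = 2 * log (√a / √b) := by
    rw [log_div hsa.ne' hsb.ne', log_sqrt (hb.trans_le hba).le, log_sqrt hb.le]
    ring
  have hr : log (√a / √b) ≤ (√a / √b - (√a / √b)⁻¹) / 2 :=
    log_le_sub_inv_div_two ((one_le_div hsb).2 (sqrt_le_sqrt hba))
  calc (log a - log b) * √(a * b) = 2 * log (√a / √b) * (√a * √b) := by
        rw [hlog, sqrt_mul (hb.trans_le hba).le]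
    _ ≤ (√a / √b - (√a / √b)⁻¹) * (√a * √b) := by gcongr; linarith
    _ = a - b := by
        field_simp
        rw [sq_sqrt (hb.trans_le hba).le, sq_sqrt hb.le]

noncomputable def phi (t x : ℝ) : ℝ := (√(x * (1 - t)) + √(t * (1 - x))) ^ 2

noncomputable def phiDeriv (t x : ℝ) : ℝ :=
  (√(x * (1 - t)) + √(t * (1 - x))) * ((1 - t) / √(x * (1 - t)) - t / √(t * (1 - x)))

section
variable {t x : ℝ}

lemma hasDerivAt_phi (hx : x * (1 - t) ≠ 0) (ht : t * (1 - x) ≠ 0) :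
    HasDerivAt (phi t) (phiDeriv t x) x := by
  have hp : HasDerivAt (fun u => √(u * (1 - t))) ((1 - t) / (2 * √(x * (1 - t)))) x :=
    ((hasDerivAt_mul_const (1 - t)).sqrt hx).congr_deriv (by simp)
  have hq : HasDerivAt (fun u => √(t * (1 - u))) (-t / (2 * √(t * (1 - x)))) x :=
    (((hasDerivAt_id x).const_sub 1).const_mul t |>.sqrt ht).congr_deriv (by simp)
  exact ((hp.add hq).pow 2).congr_deriv (by simp only [phiDeriv, Pi.add_apply]; ring)

lemma mul_sqrt_lt_one_sub_mul_sqrt (ht : 0 < t) (hx : 0 < x) (hxt : x < 1 - t) :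
    t * √(x * (1 - t)) < (1 - t) * √(t * (1 - x)) := by
  have h1t : 0 < 1 - t := by linarith
  refine lt_of_pow_lt_pow_left₀ 2 (by positivity) ?_
  rw [mul_pow, mul_pow, sq_sqrt (by positivity), sq_sqrt (by nlinarith)]
  nlinarith [mul_pos (mul_pos ht h1t) (sub_pos.2 hxt)]

lemma one_sub_mul_sqrt_sub_mul_sqrt_sq (ht : 0 ≤ t) (ht1 : t ≤ 1) (hx : 0 ≤ x) (hx1 : x ≤ 1) :
    ((1 - t) * √(t * (1 - x)) - t * √(x * (1 - t))) ^ 2 = t * (1 - t) * (1 - phi t x) := by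
  have hp := sq_sqrt (mul_nonneg hx (sub_nonneg.2 ht1))
  have hq := sq_sqrt (mul_nonneg ht (sub_nonneg.2 hx1))
  unfold phi
  linear_combination (1 - t) * hq + t * hp

lemma phi_lt_one (ht : 0 < t) (hx : 0 < x) (hxt : x < 1 - t) : phi t x < 1 := by
  have h := one_sub_mul_sqrt_sub_mul_sqrt_sq ht.le (by linarith) hx.le (by linarith)
  have hpos : 0 < ((1 - t) * √(t * (1 - x)) - t * √(x * (1 - t))) ^ 2 :=
    pow_pos (sub_pos.2 (mul_sqrt_lt_one_sub_mul_sqrt ht hx hxt)) 2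
  nlinarith [mul_pos ht (show 0 < 1 - t by linarith)]

lemma lt_phi (ht : 0 < t) (hx : 0 < x) (hxt : x < 1 - t) : x < phi t x := by
  have h1t : 0 < 1 - t := by linarith
  have h1x : 0 < 1 - x := by linarith
  have hp : 0 < √(x * (1 - t)) := sqrt_pos.2 (by positivity)
  have hq : 0 < √(t * (1 - x)) := sqrt_pos.2 (by positivity)
  have hp2 := sq_sqrt (mul_pos hx h1t).le
  have hq2 := sq_sqrt (mul_pos ht h1x).le
  unfold phi
  rcases le_or_gt x (1 / 2) with h | h
  · nlinarith [mul_pos hp hq]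
  · -- then `2 p q > t (2x - 1)` because `4 x (1 - x) > 1 - x > t`
    have hpq : (2 * (√(x * (1 - t)) * √(t * (1 - x)))) ^ 2 = 4 * (x * (1 - t)) * (t * (1 - x)) := by
      rw [mul_pow, mul_pow, hp2, hq2]; ring
    nlinarith [mul_pos hp hq, mul_pos ht (show 0 < 4 * x * (1 - x) - t by nlinarith)]

lemma phiDeriv_pos (ht : 0 < t) (hx : 0 < x) (hxt : x < 1 - t) : 0 < phiDeriv t x := by
  have hp : 0 < √(x * (1 - t)) := sqrt_pos.2 (mul_pos hx (by linarith))
  have hq : 0 < √(t * (1 - x)) := sqrt_pos.2 (mul_pos ht (by linarith))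
  refine mul_pos (by positivity) (sub_pos.2 ?_)
  rw [div_lt_div_iff₀ hq hp]
  exact mul_sqrt_lt_one_sub_mul_sqrt ht hx hxt

lemma phi_div_mul_eq_phiDeriv_sq (ht : 0 < t) (ht1 : t < 1) (hx : 0 < x) (hx1 : x < 1) :
    phi t x / x * ((1 - phi t x) / (1 - x)) = phiDeriv t x ^ 2 := by
  have h1t : 0 < 1 - t := by linarith
  have h1x : 0 < 1 - x := by linarith
  have hp : 0 < √(x * (1 - t)) := sqrt_pos.2 (by positivity)
  have hq : 0 < √(t * (1 - x)) := sqrt_pos.2 (by positivity)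
  have hpq : (√(x * (1 - t)) * √(t * (1 - x))) ^ 2 = x * (1 - x) * t * (1 - t) := by
    rw [mul_pow, sq_sqrt (by positivity), sq_sqrt (by positivity)]; ring
  have hphiDeriv : phiDeriv t x ^ 2 = phi t x *
      ((1 - t) * √(t * (1 - x)) - t * √(x * (1 - t))) ^ 2 / (√(x * (1 - t)) * √(t * (1 - x))) ^ 2 := by
    unfold phiDeriv phi
    field_simp
  rw [hphiDeriv, one_sub_mul_sqrt_sub_mul_sqrt_sq ht.le ht1.le hx.le hx1.le, hpq]
  field_simp

end

theorem stmt_17 (t : ℝ) (ht : t ∈ Set.Ioo (0 : ℝ) 1) (x : ℝ)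
    (hx : x ∈ Set.Ioo (0 : ℝ) (1 - t)) :
    let φ : ℝ → ℝ := fun u => (Real.sqrt (u * (1 - t)) + Real.sqrt (t * (1 - u))) ^ 2
    (Real.log (φ x / x) - Real.log ((1 - φ x) / (1 - x))) * deriv φ x
      ≤ φ x / x - (1 - φ x) / (1 - x) := by
  obtain ⟨ht0, ht1⟩ := ht
  obtain ⟨hx0, hxt⟩ := hx
  intro φ
  change (log (phi t x / x) - log ((1 - phi t x) / (1 - x))) * deriv (phi t) x
    ≤ phi t x / x - (1 - phi t x) / (1 - x)
  have h1x : 0 < 1 - x := by linarith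
  have hderiv : deriv (phi t) x = phiDeriv t x :=
    (hasDerivAt_phi (mul_pos hx0 (by linarith)).ne' (mul_pos ht0 h1x).ne').deriv
  have hsqrt : √(phi t x / x * ((1 - phi t x) / (1 - x))) = phiDeriv t x := by
    rw [phi_div_mul_eq_phiDeriv_sq ht0 ht1 hx0 (by linarith),
      sqrt_sq (phiDeriv_pos ht0 hx0 hxt).le]
  rw [hderiv, ← hsqrt]
  refine log_sub_log_mul_sqrt_mul_le (div_pos (sub_pos.2 (phi_lt_one ht0 hx0 hxt)) h1x) ?_
  rw [div_le_div_iff₀ h1x hx0]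
  nlinarith [lt_phi ht0 hx0 hxt]
end
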